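/- arXiv:2503.06001 — 2 statements merged into one kernel-verified Lean document; each statement's English description precedes it below -/
import Mathlib

section
/- Let d ≥ 2 and m ≥ M with M ≤ d. Then for W ∈ ℝ^{m×d} with rows w₁, …, w_m, one has L(W) = 0 if and only if every row w_i belongs to S = S₀ ∪ S₁ ∪ … ∪ S_M and Σ_{i=1}^m w_{i,j} = 1 for every j ∈ {1, …, M}. Moreover, the set 𝓜 = {W ∈ ℝ^{m×d} : L(W) = 0} is compact. -/
open MeasureTheory Real
open scoped RealInnerProductSpace

/-- The uniform (rotation-invariant) probability measure on the unit sphere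
`S^{d-1} ⊆ ℝ^d`, realized as the normalized restriction of the
`(d-1)`-dimensional Hausdorff measure to the unit sphere. -/
noncomputable def sphereUniform (d : ℕ) : Measure (EuclideanSpace ℝ (Fin d)) :=
  (μH[(d : ℝ) - 1] (Metric.sphere (0 : EuclideanSpace ℝ (Fin d)) 1))⁻¹ •
    (μH[(d : ℝ) - 1]).restrict (Metric.sphere (0 : EuclideanSpace ℝ (Fin d)) 1)

/-- The population loss of a student network with rows `W i` against the teacher
`x ↦ ∑_{j=1}^M σ(x_j)`, under inputs uniform on the sphere. -/
noncomputable def loss (d m M : ℕ) (hMd : M ≤ d)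
    (W : Fin m → EuclideanSpace ℝ (Fin d)) : ℝ :=
  ∫ x, (∑ i, max ⟪W i, x⟫ 0 - ∑ j : Fin M, max (x (Fin.castLE hMd j)) 0) ^ 2
    ∂(sphereUniform d)

/-- `S_j = {α e_j : α > 0}`, the open ray through the `j`-th standard basis vector. -/
def ray (d M : ℕ) (hMd : M ≤ d) (j : Fin M) : Set (EuclideanSpace ℝ (Fin d)) :=
  {w | ∃ α : ℝ, 0 < α ∧ w = α • EuclideanSpace.single (Fin.castLE hMd j) (1 : ℝ)}

/-- `S = S₀ ∪ S₁ ∪ … ∪ S_M` where `S₀ = {0}`. -/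
def Sset (d M : ℕ) (hMd : M ≤ d) : Set (EuclideanSpace ℝ (Fin d)) :=
  {0} ∪ ⋃ j : Fin M, ray d M hMd j

open Finset Metric
open scoped NNReal ENNReal

section AuxLemmas

lemma aux_abs_eq {a b : ℝ} (h : |b| ≤ |a|) : |a + b| + |a - b| = 2 * |a| := by
  rcases le_total 0 a with ha | ha <;> rw [abs_le] at h
  · rw [abs_of_nonneg ha] at h ⊢
    rw [abs_of_nonneg (by linarith), abs_of_nonneg (by linarith)]; ring
  · rw [abs_of_nonpos ha] at h ⊢
    rw [abs_of_nonpos (by linarith), abs_of_nonpos (by linarith)]; ring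

lemma aux_abs_ge (a b : ℝ) : 2 * |a| ≤ |a + b| + |a - b| := by
  have := abs_add_le (a + b) (a - b)
  have h2 : a + b + (a - b) = 2 * a := by ring
  rw [h2, abs_mul] at this
  simpa using this

lemma sum_single_apply (d M : ℕ) (hMd : M ≤ d) (f : Fin M → ℝ) (j : Fin M) :
    ((∑ j' : Fin M, EuclideanSpace.single (Fin.castLE hMd j') (f j')) :
      EuclideanSpace ℝ (Fin d)) (Fin.castLE hMd j) = f j := by
  rw [WithLp.ofLp_sum, Finset.sum_apply]
  simp only [EuclideanSpace.single_apply, Fin.castLE_inj]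
  simp

lemma single_apply_ne (d M : ℕ) (hMd : M ≤ d) (c : ℝ) (k : Fin d)
    (hk : ¬ ((k : ℕ) < M)) (j : Fin M) :
    (EuclideanSpace.single k c : EuclideanSpace ℝ (Fin d)) (Fin.castLE hMd j) = 0 := by
  rw [EuclideanSpace.single_apply, if_neg]
  intro h
  apply hk
  rw [← h]
  simpa using j.2

lemma inner_sum_single (d M : ℕ) (hMd : M ≤ d) (w : EuclideanSpace ℝ (Fin d))
    (f : Fin M → ℝ) :
    ⟪w, (∑ j' : Fin M, EuclideanSpace.single (Fin.castLE hMd j') (f j') :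
      EuclideanSpace ℝ (Fin d))⟫ = ∑ j' : Fin M, f j' * w (Fin.castLE hMd j') := by
  rw [inner_sum]
  refine Finset.sum_congr rfl fun j' _ => ?_
  rw [EuclideanSpace.inner_single_right]
  simp

lemma exists_orth (d M : ℕ) (hMd : M ≤ d) (w : EuclideanSpace ℝ (Fin d)) (hw : w ≠ 0)
    (hnp : ∀ (j : Fin M) (c : ℝ), w ≠ c • EuclideanSpace.single (Fin.castLE hMd j) (1:ℝ)) :
    ∃ x : EuclideanSpace ℝ (Fin d), ⟪w, x⟫ = 0 ∧
      ∀ j : Fin M, x (Fin.castLE hMd j) ≠ 0 := by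
  by_cases hcase : ∃ k : Fin d, ¬ ((k : ℕ) < M) ∧ w k ≠ 0
  · obtain ⟨k, hkM, hwk⟩ := hcase
    set S : ℝ := ∑ j : Fin M, w (Fin.castLE hMd j) with hS
    refine ⟨(∑ j : Fin M, EuclideanSpace.single (Fin.castLE hMd j) (1:ℝ)) +
      EuclideanSpace.single k (-S / w k), ?_, ?_⟩
    · rw [inner_add_right, inner_sum_single]
      rw [EuclideanSpace.inner_single_right]
      simp only [one_mul, star_trivial, RCLike.star_def, conj_trivial]
      rw [div_mul_cancel₀ _ hwk]
      ring_nf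
      simp [hS]
    · intro j
      rw [PiLp.add_apply, sum_single_apply d M hMd (fun _ => (1:ℝ)) j,
        single_apply_ne d M hMd _ k hkM j]
      norm_num
  · push_neg at hcase
    have ha : ∃ a : Fin d, w a ≠ 0 := by
      by_contra h
      push_neg at h
      exact hw (by ext a; simpa using h a)
    obtain ⟨a, haw⟩ := ha
    have haM : (a : ℕ) < M := by
      by_contra h
      exact haw (hcase a (not_lt.mp h))
    set aj : Fin M := ⟨a, haM⟩ with haj
    have hacast : Fin.castLE hMd aj = a := by ext; rfl
    have hb : ∃ k : Fin d, k ≠ a ∧ w k ≠ 0 := by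
      have hne := hnp aj (w a)
      rw [hacast] at hne
      by_contra h
      push_neg at h
      apply hne
      ext k
      rw [PiLp.smul_apply, EuclideanSpace.single_apply, smul_eq_mul]
      by_cases hk : k = a
      · subst hk; simp
      · simp [if_neg (by exact fun hh => hk hh), h k hk]
    obtain ⟨b, hba, hbw⟩ := hb
    have hbM : (b : ℕ) < M := by
      by_contra h
      exact hbw (hcase b (not_lt.mp h))
    set bj : Fin M := ⟨b, hbM⟩ with hbj
    have hbcast : Fin.castLE hMd bj = b := by ext; rfl
    have hbaj : bj ≠ aj := fun h => hba (by rw [← hbcast, ← hacast, h])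
    set C : ℝ := ∑ j' : Fin M, (if j' = aj ∨ j' = bj then 0 else 1) * w (Fin.castLE hMd j') with hC
    set s : ℝ := if C = 0 then 1 else C / w b with hs_def
    have hs : s ≠ 0 := by
      rw [hs_def]
      split_ifs with h
      · norm_num
      · exact div_ne_zero h hbw
    set coeff : Fin M → ℝ := fun j' => if j' = aj then 0 else if j' = bj then s else 1 with hcoeff
    have hT : ∑ j' : Fin M, coeff j' * w (Fin.castLE hMd j') = s * w b + C := by
      have hsplit : ∀ j' : Fin M, coeff j' * w (Fin.castLE hMd j') =
          (if bj = j' then s * w (Fin.castLE hMd j') else 0) +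
          (if j' = aj ∨ j' = bj then 0 else 1) * w (Fin.castLE hMd j') := by
        intro j'
        simp only [hcoeff]
        by_cases h1 : j' = aj
        · subst h1
          rw [if_pos rfl, if_neg hbaj, if_pos (Or.inl rfl)]
          ring
        · rw [if_neg h1]
          by_cases h2 : j' = bj
          · subst h2
            rw [if_pos rfl, if_pos rfl, if_pos (Or.inr rfl)]; ring
          · rw [if_neg h2, if_neg (fun hh => h2 hh.symm), if_neg (by tauto)]; ring
      rw [Finset.sum_congr rfl (fun j' _ => hsplit j'), Finset.sum_add_distrib,
        Finset.sum_ite_eq, if_pos (Finset.mem_univ bj), hbcast]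
    set T : ℝ := s * w b + C with hTdef
    have hTne : T ≠ 0 := by
      rw [hTdef, hs_def]
      split_ifs with h
      · rw [h]; simpa using hbw
      · rw [div_mul_cancel₀ _ hbw]
        intro hh
        exact h (by linarith)
    refine ⟨(∑ j' : Fin M, EuclideanSpace.single (Fin.castLE hMd j') (coeff j')) +
      EuclideanSpace.single a (-T / w a), ?_, ?_⟩
    · rw [inner_add_right, inner_sum_single, hT, EuclideanSpace.inner_single_right]
      simp only [star_trivial, RCLike.star_def, conj_trivial]
      rw [div_mul_cancel₀ _ haw]
      ring
    · intro j
      rw [PiLp.add_apply, sum_single_apply d M hMd coeff j, EuclideanSpace.single_apply]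
      by_cases hj : j = aj
      · subst hj
        have hc0 : coeff aj = 0 := by simp [hcoeff]
        rw [hc0, hacast, if_pos rfl]
        simpa using div_ne_zero (neg_ne_zero.mpr hTne) haw
      · have hca : Fin.castLE hMd j ≠ a := by
          rw [← hacast]
          exact fun h => hj (Fin.castLE_inj.mp h)
        rw [if_neg hca, add_zero]
        have hc1 : coeff j = if j = bj then s else 1 := by simp [hcoeff, hj]
        rw [hc1]
        split_ifs with h2
        · exact hs
        · norm_num

lemma rows_axis (d m M : ℕ) (hMd : M ≤ d) (W : Fin m → EuclideanSpace ℝ (Fin d))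
    (habs : ∀ x : EuclideanSpace ℝ (Fin d),
      ∑ i, |⟪W i, x⟫| = ∑ j : Fin M, |x (Fin.castLE hMd j)|) (i : Fin m) :
    W i = 0 ∨ ∃ (j : Fin M) (c : ℝ), c ≠ 0 ∧
      W i = c • EuclideanSpace.single (Fin.castLE hMd j) (1:ℝ) := by
  by_contra hcon
  push_neg at hcon
  obtain ⟨hW0, hnotax⟩ := hcon
  have hnp : ∀ (j : Fin M) (c : ℝ), W i ≠ c • EuclideanSpace.single (Fin.castLE hMd j) (1:ℝ) := by
    intro j c h
    rcases eq_or_ne c 0 with hc | hc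
    · exact hW0 (by rw [h, hc, zero_smul])
    · exact hnotax j c hc h
  obtain ⟨x, hx0, hxne⟩ := exists_orth d M hMd (W i) hW0 hnp
  -- M must be positive, otherwise W i = 0 directly
  rcases Nat.eq_zero_or_pos M with hM | hM
  · apply hW0
    have h := habs (W i)
    subst hM
    simp only [Finset.univ_eq_empty, Finset.sum_empty] at h
    · have : |⟪W i, W i⟫| = 0 := by
        have h1 : ∀ i' : Fin m, 0 ≤ |⟪W i', W i⟫| := fun _ => abs_nonneg _
        have := (Finset.sum_eq_zero_iff_of_nonneg (fun i' _ => h1 i')).mp h i (Finset.mem_univ i)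
        exact this
      rw [abs_eq_zero] at this
      exact inner_self_eq_zero.mp this
  -- choose the scale t
  have hne : (Finset.univ : Finset (Fin M)).Nonempty := Finset.univ_nonempty_iff.mpr
    (Fin.pos_iff_nonempty.mp hM)
  set v : EuclideanSpace ℝ (Fin d) := W i with hv
  set t : ℝ := Finset.univ.inf' hne
    (fun j => |x (Fin.castLE hMd j)| / (|v (Fin.castLE hMd j)| + 1)) with ht
  have htpos : 0 < t := by
    rw [ht]
    apply (Finset.lt_inf'_iff hne).mpr
    intro j _
    exact div_pos (abs_pos.mpr (hxne j)) (by positivity)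
  have htle : ∀ j : Fin M, |t * v (Fin.castLE hMd j)| ≤ |x (Fin.castLE hMd j)| := by
    intro j
    rw [abs_mul, abs_of_pos htpos]
    have h1 : t ≤ |x (Fin.castLE hMd j)| / (|v (Fin.castLE hMd j)| + 1) :=
      Finset.inf'_le _ (Finset.mem_univ j)
    calc t * |v (Fin.castLE hMd j)|
        ≤ (|x (Fin.castLE hMd j)| / (|v (Fin.castLE hMd j)| + 1)) * |v (Fin.castLE hMd j)| := by
          apply mul_le_mul_of_nonneg_right h1 (abs_nonneg _)
      _ ≤ |x (Fin.castLE hMd j)| := by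
          rw [div_mul_eq_mul_div, div_le_iff₀ (by positivity)]
          have := abs_nonneg (x (Fin.castLE hMd j))
          nlinarith [abs_nonneg (v (Fin.castLE hMd j))]
  -- apply the identity at x + t v and x - t v
  have hplus := habs (x + t • v)
  have hminus := habs (x - t • v)
  have hip : ∀ i' : Fin m, ⟪W i', x + t • v⟫ = ⟪W i', x⟫ + t * ⟪W i', v⟫ := by
    intro i'
    rw [inner_add_right, real_inner_smul_right]
  have him : ∀ i' : Fin m, ⟪W i', x - t • v⟫ = ⟪W i', x⟫ - t * ⟪W i', v⟫ := by
    intro i'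
    rw [inner_sub_right, real_inner_smul_right]
  have hcp : ∀ j : Fin M, (x + t • v) (Fin.castLE hMd j) =
      x (Fin.castLE hMd j) + t * v (Fin.castLE hMd j) := by
    intro j
    rw [PiLp.add_apply, PiLp.smul_apply, smul_eq_mul]
  have hcm : ∀ j : Fin M, (x - t • v) (Fin.castLE hMd j) =
      x (Fin.castLE hMd j) - t * v (Fin.castLE hMd j) := by
    intro j
    rw [PiLp.sub_apply, PiLp.smul_apply, smul_eq_mul]
  simp only [hip, hcp] at hplus
  simp only [him, hcm] at hminus
  -- sum the two identities
  have hsum : ∑ i', (|⟪W i', x⟫ + t * ⟪W i', v⟫| + |⟪W i', x⟫ - t * ⟪W i', v⟫|)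
      = ∑ j : Fin M, 2 * |x (Fin.castLE hMd j)| := by
    rw [Finset.sum_add_distrib, hplus, hminus, ← Finset.sum_add_distrib]
    refine Finset.sum_congr rfl fun j _ => ?_
    exact aux_abs_eq (htle j)
  have hbase := habs x
  -- strict inequality
  have hstrict : ∑ i', (2 * |⟪W i', x⟫|) <
      ∑ i', (|⟪W i', x⟫ + t * ⟪W i', v⟫| + |⟪W i', x⟫ - t * ⟪W i', v⟫|) := by
    apply Finset.sum_lt_sum
    · intro i' _
      exact aux_abs_ge _ _
    · refine ⟨i, Finset.mem_univ i, ?_⟩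
      rw [← hv, hx0]
      have hvv : (0:ℝ) < ⟪v, v⟫ := by
        rw [real_inner_self_eq_norm_sq]
        exact pow_pos (norm_pos_iff.mpr (by rw [hv]; exact hW0)) 2
      rw [abs_of_nonneg (by positivity : (0:ℝ) ≤ 0 + t * ⟪v, v⟫)]
      rw [abs_of_nonpos (by nlinarith : (0:ℝ) - t * ⟪v, v⟫ ≤ 0)]
      simp only [abs_zero]
      nlinarith
  rw [hsum] at hstrict
  rw [← Finset.mul_sum, ← Finset.mul_sum, ← hbase] at hstrict
  linarith

lemma relu_scale {c : ℝ} (hc : 0 ≤ c) (a : ℝ) : max (c * a) 0 = c * max a 0 := by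
  rcases le_total 0 a with ha | ha
  · rw [max_eq_left (by positivity), max_eq_left ha]
  · rw [max_eq_right (by nlinarith), max_eq_right ha, mul_zero]

lemma max_add_max_neg (a : ℝ) : max a 0 + max (-a) 0 = |a| := by
  rcases le_total 0 a with ha | ha
  · rw [max_eq_left ha, max_eq_right (by linarith), abs_of_nonneg ha, add_zero]
  · rw [max_eq_right ha, max_eq_left (by linarith), abs_of_nonpos ha, zero_add]

lemma identity_everywhere (d m M : ℕ) (hMd : M ≤ d)
    (W : Fin m → EuclideanSpace ℝ (Fin d))
    (hsph : ∀ x ∈ Metric.sphere (0 : EuclideanSpace ℝ (Fin d)) 1,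
      ∑ i, max ⟪W i, x⟫ 0 = ∑ j : Fin M, max (x (Fin.castLE hMd j)) 0)
    (x : EuclideanSpace ℝ (Fin d)) :
    ∑ i, max ⟪W i, x⟫ 0 = ∑ j : Fin M, max (x (Fin.castLE hMd j)) 0 := by
  rcases eq_or_ne x 0 with hx | hx
  · subst hx
    simp
  · set u : EuclideanSpace ℝ (Fin d) := ‖x‖⁻¹ • x with hu
    have hu1 : u ∈ Metric.sphere (0 : EuclideanSpace ℝ (Fin d)) 1 := by
      rw [mem_sphere_zero_iff_norm]
      exact norm_smul_inv_norm hx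
    have hxu : x = ‖x‖ • u := by
      rw [hu, smul_smul, mul_inv_cancel₀ (norm_ne_zero_iff.mpr hx), one_smul]
    have hkey := hsph u hu1
    have hnn : (0:ℝ) ≤ ‖x‖ := norm_nonneg x
    have hin : ∀ i : Fin m, ⟪W i, x⟫ = ‖x‖ * ⟪W i, u⟫ := by
      intro i
      conv_lhs => rw [hxu]
      rw [real_inner_smul_right]
    have hco : ∀ j : Fin M, x (Fin.castLE hMd j) = ‖x‖ * u (Fin.castLE hMd j) := by
      intro j
      conv_lhs => rw [hxu]
      rw [PiLp.smul_apply, smul_eq_mul]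
    calc ∑ i, max ⟪W i, x⟫ 0 = ∑ i, ‖x‖ * max ⟪W i, u⟫ 0 := by
          refine Finset.sum_congr rfl fun i _ => ?_
          rw [hin i, relu_scale hnn]
      _ = ‖x‖ * ∑ i, max ⟪W i, u⟫ 0 := (Finset.mul_sum _ _ _).symm
      _ = ‖x‖ * ∑ j : Fin M, max (u (Fin.castLE hMd j)) 0 := by rw [hkey]
      _ = ∑ j : Fin M, max (x (Fin.castLE hMd j)) 0 := by
          rw [Finset.mul_sum]
          refine (Finset.sum_congr rfl fun j _ => ?_).symm
          rw [hco j, relu_scale hnn]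

lemma forward_alg (d m M : ℕ) (hMd : M ≤ d) (W : Fin m → EuclideanSpace ℝ (Fin d))
    (hK : ∀ x : EuclideanSpace ℝ (Fin d),
      ∑ i, max ⟪W i, x⟫ 0 = ∑ j : Fin M, max (x (Fin.castLE hMd j)) 0) :
    (∀ i, W i ∈ Sset d M hMd) ∧
      ∀ j : Fin M, ∑ i, W i (Fin.castLE hMd j) = 1 := by
  have habs : ∀ x : EuclideanSpace ℝ (Fin d),
      ∑ i, |⟪W i, x⟫| = ∑ j : Fin M, |x (Fin.castLE hMd j)| := by
    intro x
    have h1 := hK x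
    have h2 := hK (-x)
    have hsum : (∑ i, max ⟪W i, x⟫ 0) + ∑ i, max ⟪W i, -x⟫ 0 =
        (∑ j : Fin M, max (x (Fin.castLE hMd j)) 0) +
          ∑ j : Fin M, max ((-x) (Fin.castLE hMd j)) 0 := by rw [h1, h2]
    rw [← Finset.sum_add_distrib, ← Finset.sum_add_distrib] at hsum
    calc ∑ i, |⟪W i, x⟫| = ∑ i, (max ⟪W i, x⟫ 0 + max ⟪W i, -x⟫ 0) := by
          refine Finset.sum_congr rfl fun i _ => ?_
          rw [inner_neg_right, max_add_max_neg]
      _ = ∑ j : Fin M, (max (x (Fin.castLE hMd j)) 0 + max ((-x) (Fin.castLE hMd j)) 0) := hsum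
      _ = ∑ j : Fin M, |x (Fin.castLE hMd j)| := by
          refine Finset.sum_congr rfl fun j _ => ?_
          rw [PiLp.neg_apply, max_add_max_neg]
  have hnonneg : ∀ (i : Fin m) (j : Fin M), 0 ≤ W i (Fin.castLE hMd j) := by
    intro i j
    have h := hK (-EuclideanSpace.single (Fin.castLE hMd j) (1:ℝ))
    have hrhs : ∑ j2 : Fin M,
        max ((-EuclideanSpace.single (Fin.castLE hMd j) (1:ℝ))
          (Fin.castLE hMd j2)) 0 = 0 := by
      apply Finset.sum_eq_zero
      intro j2 _
      rw [PiLp.neg_apply, EuclideanSpace.single_apply]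
      split_ifs <;> norm_num
    rw [hrhs] at h
    have hterm : ∀ i' : Fin m, (0:ℝ) ≤ max ⟪W i', -EuclideanSpace.single (Fin.castLE hMd j) (1:ℝ)⟫ 0 :=
      fun i' => le_max_right _ 0
    have := (Finset.sum_eq_zero_iff_of_nonneg (fun i' _ => hterm i')).mp h i (Finset.mem_univ i)
    rw [inner_neg_right, EuclideanSpace.inner_single_right] at this
    simp only [one_mul, RCLike.star_def, conj_trivial] at this
    by_contra hcon
    push_neg at hcon
    rw [max_eq_left (by linarith)] at this
    linarith
  have hsum1 : ∀ j : Fin M, ∑ i, W i (Fin.castLE hMd j) = 1 := by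
    intro j
    have h := hK (EuclideanSpace.single (Fin.castLE hMd j) (1:ℝ))
    have hrhs : ∑ j2 : Fin M,
        max ((EuclideanSpace.single (Fin.castLE hMd j) (1:ℝ)) (Fin.castLE hMd j2)) 0 = 1 := by
      have : ∀ j2 : Fin M,
          max ((EuclideanSpace.single (Fin.castLE hMd j) (1:ℝ)) (Fin.castLE hMd j2)) 0
          = if j2 = j then 1 else 0 := by
        intro j2
        rw [EuclideanSpace.single_apply]
        simp only [Fin.castLE_inj]
        split_ifs <;> norm_num
      rw [Finset.sum_congr rfl fun j2 _ => this j2, Finset.sum_ite_eq' Finset.univ j (fun _ => (1:ℝ)),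
        if_pos (Finset.mem_univ j)]
    rw [hrhs] at h
    rw [← h]
    refine Finset.sum_congr rfl fun i _ => ?_
    rw [EuclideanSpace.inner_single_right]
    simp only [one_mul, RCLike.star_def, conj_trivial]
    rw [max_eq_left (hnonneg i j)]
  refine ⟨fun i => ?_, hsum1⟩
  rcases rows_axis d m M hMd W habs i with h0 | ⟨j, c, hc, hWi⟩
  · exact Or.inl h0
  · right
    refine Set.mem_iUnion.mpr ⟨j, c, ?_, hWi⟩
    have hcoord : W i (Fin.castLE hMd j) = c := by
      rw [hWi, PiLp.smul_apply, EuclideanSpace.single_apply, if_pos rfl, smul_eq_mul, mul_one]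
    have := hnonneg i j
    rw [hcoord] at this
    exact lt_of_le_of_ne this (Ne.symm hc)

lemma converse_alg (d m M : ℕ) (hMd : M ≤ d) (W : Fin m → EuclideanSpace ℝ (Fin d))
    (h1 : ∀ i, W i ∈ Sset d M hMd)
    (h2 : ∀ j : Fin M, ∑ i, W i (Fin.castLE hMd j) = 1)
    (x : EuclideanSpace ℝ (Fin d)) :
    ∑ i, max ⟪W i, x⟫ 0 = ∑ j : Fin M, max (x (Fin.castLE hMd j)) 0 := by
  have hrow : ∀ i, max ⟪W i, x⟫ 0 =
      ∑ j : Fin M, W i (Fin.castLE hMd j) * max (x (Fin.castLE hMd j)) 0 := by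
    intro i
    rcases h1 i with h0 | hray
    · rw [Set.mem_singleton_iff] at h0
      rw [h0]
      simp only [inner_zero_left, max_self]
      symm
      apply Finset.sum_eq_zero
      intro j _
      have : (0 : EuclideanSpace ℝ (Fin d)) (Fin.castLE hMd j) = 0 := rfl
      rw [this, zero_mul]
    · obtain ⟨j0, α, hα, hWi⟩ := Set.mem_iUnion.mp hray
      have hcoord : ∀ j : Fin M, W i (Fin.castLE hMd j) = if j = j0 then α else 0 := by
        intro j
        rw [hWi, PiLp.smul_apply, EuclideanSpace.single_apply, smul_eq_mul]
        simp only [Fin.castLE_inj]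
        split_ifs <;> ring
      have hinner : ⟪W i, x⟫ = α * x (Fin.castLE hMd j0) := by
        rw [hWi, real_inner_smul_left, EuclideanSpace.inner_single_left]
        simp
      rw [hinner, relu_scale hα.le]
      have hpt : ∀ j : Fin M, (if j = j0 then α else 0) * max (x (Fin.castLE hMd j)) 0
          = if j = j0 then α * max (x (Fin.castLE hMd j)) 0 else 0 := by
        intro j
        split_ifs <;> ring
      calc α * max (x (Fin.castLE hMd j0)) 0
          = ∑ j : Fin M, (if j = j0 then α else 0) * max (x (Fin.castLE hMd j)) 0 := by
            rw [Finset.sum_congr rfl (fun j _ => hpt j),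
              Finset.sum_ite_eq' Finset.univ j0
                (fun j => α * max (x (Fin.castLE hMd j)) 0), if_pos (Finset.mem_univ j0)]
        _ = ∑ j : Fin M, W i (Fin.castLE hMd j) * max (x (Fin.castLE hMd j)) 0 := by
            refine Finset.sum_congr rfl fun j _ => ?_
            rw [hcoord j]
  rw [Finset.sum_congr rfl fun i _ => hrow i, Finset.sum_comm]
  refine Finset.sum_congr rfl fun j _ => ?_
  rw [← Finset.sum_mul, h2 j, one_mul]


-- positivity of Hausdorff measure on open sets of Euclidean space

lemma hm_open_pos (n : ℕ) (s : Set (EuclideanSpace ℝ (Fin n))) (hs : IsOpen s)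
    (hne : s.Nonempty) : 0 < μH[(n : ℝ)] s := by
  have hlip : LipschitzWith 1 (WithLp.equiv 2 (Fin n → ℝ)) := PiLp.lipschitzWith_ofLp 2 _
  have himg := hlip.hausdorffMeasure_image_le (by positivity : (0:ℝ) ≤ (n:ℝ))
    s
  have hpi : (μH[(n : ℝ)] : Measure (Fin n → ℝ)) = volume := by
    have := MeasureTheory.hausdorffMeasure_pi_real (ι := Fin n)
    simpa using this
  rw [hpi] at himg
  rw [ENNReal.coe_one, ENNReal.one_rpow, one_mul] at himg
  have hvol : 0 < volume ((WithLp.equiv 2 (Fin n → ℝ)) '' s) := by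
    have hopen : IsOpen ((WithLp.equiv 2 (Fin n → ℝ)) '' s) := by
      have : (WithLp.equiv 2 (Fin n → ℝ)) '' s =
          (WithLp.equiv 2 (Fin n → ℝ)).symm ⁻¹' s := by
        rw [Equiv.image_eq_preimage_symm]
      rw [this]
      exact (PiLp.continuous_toLp 2 _).isOpen_preimage s hs
    exact hopen.measure_pos volume (hne.image _)
  exact lt_of_lt_of_le hvol himg


-- finiteness of n-dim Hausdorff measure of bounded sets in Euclidean n-space

lemma hm_bounded_lt_top (n : ℕ) (s : Set (EuclideanSpace ℝ (Fin n)))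
    (hb : Bornology.IsBounded s) : μH[(n : ℝ)] s < ⊤ := by
  set e := WithLp.equiv 2 (Fin n → ℝ) with he
  have hanti := PiLp.antilipschitzWith_ofLp 2 (fun _ : Fin n => ℝ)
  set K : ℝ≥0 := (Fintype.card (Fin n) : ℝ≥0) ^ ((1:ℝ≥0∞) / 2).toReal with hK
  have hlips : LipschitzWith K e.symm := by
    intro a b
    have := hanti (e.symm a) (e.symm b)
    exact this
  have himg := hlips.hausdorffMeasure_image_le (by positivity : (0:ℝ) ≤ (n:ℝ)) (e '' s)
  have hss : e.symm '' (e '' s) = s := by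
    rw [Equiv.symm_image_image]
  rw [hss] at himg
  have hpi : (μH[(n : ℝ)] : Measure (Fin n → ℝ)) = volume := by
    have := MeasureTheory.hausdorffMeasure_pi_real (ι := Fin n)
    simpa using this
  rw [hpi] at himg
  have hbd : Bornology.IsBounded (e '' s) :=
    ((PiLp.lipschitzWith_ofLp 2 (fun _ : Fin n => ℝ)).isBounded_image hb)
  obtain ⟨r, hr⟩ := hbd.subset_closedBall 0
  have hvol : volume (e '' s) < ⊤ :=
    lt_of_le_of_lt (measure_mono hr) (measure_closedBall_lt_top)
  refine lt_of_le_of_lt himg ?_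
  exact ENNReal.mul_lt_top (ENNReal.rpow_lt_top_of_nonneg (by positivity) ENNReal.coe_ne_top)
    hvol


-- coordinate bound

lemma coord_le_norm {n : ℕ} (x : EuclideanSpace ℝ (Fin n)) (i : Fin n) :
    |x i| ≤ ‖x‖ := by
  have h := abs_real_inner_le_norm (EuclideanSpace.single i (1:ℝ)) x
  rw [EuclideanSpace.inner_single_left] at h
  simpa using h

-- the insertion map is an isometry

noncomputable def insE {n : ℕ} (k : Fin (n + 1)) (c : ℝ)
    (y : EuclideanSpace ℝ (Fin n)) : EuclideanSpace ℝ (Fin (n + 1)) :=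
  (WithLp.equiv 2 (Fin (n+1) → ℝ)).symm (Fin.insertNth k c (WithLp.equiv 2 (Fin n → ℝ) y))

lemma insE_apply_same {n : ℕ} (k : Fin (n + 1)) (c : ℝ) (y : EuclideanSpace ℝ (Fin n)) :
    insE k c y k = c := by
  simp [insE]

lemma insE_apply_succAbove {n : ℕ} (k : Fin (n + 1)) (c : ℝ) (y : EuclideanSpace ℝ (Fin n))
    (j : Fin n) : insE k c y (k.succAbove j) = y j := by
  simp [insE]

lemma insE_isometry {n : ℕ} (k : Fin (n + 1)) (c : ℝ) :
    Isometry (insE k c) := by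
  intro y z
  rw [edist_dist, edist_dist]
  congr 1
  rw [EuclideanSpace.dist_eq, EuclideanSpace.dist_eq]
  congr 1
  rw [Fin.sum_univ_succAbove (fun j => dist (insE k c y j) (insE k c z j) ^ 2) k]
  simp [insE_apply_same, insE_apply_succAbove]

-- deletion map is 1-Lipschitz

noncomputable def delE {n : ℕ} (k : Fin (n + 1)) (x : EuclideanSpace ℝ (Fin (n + 1))) :
    EuclideanSpace ℝ (Fin n) :=
  (WithLp.equiv 2 (Fin n → ℝ)).symm (fun j => x (k.succAbove j))

lemma delE_apply {n : ℕ} (k : Fin (n + 1)) (x : EuclideanSpace ℝ (Fin (n + 1))) (j : Fin n) :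
    delE k x j = x (k.succAbove j) := rfl

lemma delE_lipschitz {n : ℕ} (k : Fin (n + 1)) : LipschitzWith 1 (delE k) := by
  apply LipschitzWith.of_dist_le_mul
  intro x y
  rw [NNReal.coe_one, one_mul, EuclideanSpace.dist_eq, EuclideanSpace.dist_eq]
  apply Real.sqrt_le_sqrt
  rw [Fin.sum_univ_succAbove (fun j => (dist (x j) (y j))^2) k]
  have : ∑ j : Fin n, dist (delE k x j) (delE k y j) ^ 2
      = ∑ j : Fin n, dist (x (k.succAbove j)) (y (k.succAbove j)) ^ 2 := by
    refine Finset.sum_congr rfl fun j _ => by rw [delE_apply, delE_apply]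
  rw [this]
  have h0 : (0:ℝ) ≤ dist (x k) (y k) ^ 2 := sq_nonneg _
  linarith

-- normalization is Lipschitz on the complement of the unit ball

lemma normalize_lipschitzOn {E : Type*} [NormedAddCommGroup E] [NormedSpace ℝ E] :
    LipschitzOnWith 2 (fun x : E => ‖x‖⁻¹ • x) {x : E | 1 ≤ ‖x‖} := by
  rw [lipschitzOnWith_iff_dist_le_mul]
  intro x hx y hy
  simp only [Set.mem_setOf_eq] at hx hy
  have hxp : (0:ℝ) < ‖x‖ := lt_of_lt_of_le one_pos hx
  have hyp : (0:ℝ) < ‖y‖ := lt_of_lt_of_le one_pos hy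
  rw [dist_eq_norm, dist_eq_norm]
  have step : ‖x‖⁻¹ • x - ‖y‖⁻¹ • y = ‖x‖⁻¹ • (x - y) + (‖x‖⁻¹ - ‖y‖⁻¹) • y := by
    rw [smul_sub, sub_smul]
    abel
  rw [step]
  have h1 : ‖‖x‖⁻¹ • (x - y)‖ = ‖x‖⁻¹ * ‖x - y‖ := by
    rw [norm_smul, norm_inv, norm_norm]
  have h2 : ‖(‖x‖⁻¹ - ‖y‖⁻¹) • y‖ = |‖x‖⁻¹ - ‖y‖⁻¹| * ‖y‖ := by
    rw [norm_smul, Real.norm_eq_abs]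
  have h3 : |‖x‖⁻¹ - ‖y‖⁻¹| * ‖y‖ ≤ ‖x‖⁻¹ * ‖x - y‖ := by
    have hid : ‖x‖⁻¹ - ‖y‖⁻¹ = (‖y‖ - ‖x‖) / (‖x‖ * ‖y‖) := by
      field_simp
    rw [hid, abs_div, abs_of_pos (mul_pos hxp hyp)]
    rw [div_mul_eq_mul_div, div_le_iff₀ (mul_pos hxp hyp)]
    have habs : |‖y‖ - ‖x‖| ≤ ‖x - y‖ := by
      rw [abs_sub_comm]
      exact abs_norm_sub_norm_le x y
    have hcan : ‖x‖⁻¹ * ‖x - y‖ * (‖x‖ * ‖y‖) = ‖x - y‖ * ‖y‖ := by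
      field_simp
    rw [hcan]
    exact mul_le_mul_of_nonneg_right habs (norm_nonneg _)
  have h4 : ‖x‖⁻¹ ≤ 1 := by
    rw [inv_le_one_iff₀]
    right; exact hx
  calc ‖‖x‖⁻¹ • (x - y) + (‖x‖⁻¹ - ‖y‖⁻¹) • y‖
      ≤ ‖‖x‖⁻¹ • (x - y)‖ + ‖(‖x‖⁻¹ - ‖y‖⁻¹) • y‖ := norm_add_le _ _
    _ ≤ ‖x‖⁻¹ * ‖x - y‖ + ‖x‖⁻¹ * ‖x - y‖ := by rw [h1, h2]; linarith
    _ = 2 * ‖x‖⁻¹ * ‖x - y‖ := by ring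
    _ ≤ 2 * ‖x - y‖ := by
        have := norm_nonneg (x - y)
        nlinarith

lemma norm_sq_insE {n : ℕ} (k : Fin (n + 1)) (c : ℝ) (y : EuclideanSpace ℝ (Fin n)) :
    ‖insE k c y‖ ^ 2 = c ^ 2 + ‖y‖ ^ 2 := by
  rw [EuclideanSpace.norm_eq, EuclideanSpace.norm_eq,
    Real.sq_sqrt (by positivity), Real.sq_sqrt (by positivity)]
  rw [Fin.sum_univ_succAbove (fun j => ‖insE k c y j‖ ^ 2) k]
  simp [insE_apply_same, insE_apply_succAbove, sq_abs]

lemma delE_insE {n : ℕ} (k : Fin (n + 1)) (c : ℝ) (y : EuclideanSpace ℝ (Fin n)) :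
    delE k (insE k c y) = y := by
  ext j
  rw [delE_apply, insE_apply_succAbove]

lemma insE_delE {n : ℕ} (k : Fin (n + 1)) (z : EuclideanSpace ℝ (Fin (n + 1))) :
    insE k (z k) (delE k z) = z := by
  ext j
  induction j using Fin.succAboveCases with
  | i => exact k
  | x => exact insE_apply_same k (z k) (delE k z)
  | p j => rw [insE_apply_succAbove, delE_apply]

-- cube

def cube (n : ℕ) : Set (EuclideanSpace ℝ (Fin n)) := {y | ∀ j, |y j| ≤ 1}

lemma cube_bounded (n : ℕ) : Bornology.IsBounded (cube n) := by
  apply (Metric.isBounded_closedBall (x := (0 : EuclideanSpace ℝ (Fin n))) (r := (n:ℝ)+1)).subset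
  intro y hy
  rw [Metric.mem_closedBall, dist_zero_right, EuclideanSpace.norm_eq]
  have h1 : ∑ i, ‖y i‖ ^ 2 ≤ (n:ℝ) := by
    calc ∑ i, ‖y i‖ ^ 2 ≤ ∑ _i : Fin n, (1:ℝ) := by
          refine Finset.sum_le_sum fun i _ => ?_
          have := hy i
          rw [Real.norm_eq_abs]
          nlinarith [abs_nonneg (y i)]
      _ = (n:ℝ) := by simp
  calc Real.sqrt (∑ i, ‖y i‖ ^ 2) ≤ Real.sqrt ((n:ℝ)) := Real.sqrt_le_sqrt h1
    _ ≤ (n:ℝ) + 1 := by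
        rw [show (n:ℝ) + 1 = Real.sqrt (((n:ℝ)+1)^2) by
          rw [Real.sqrt_sq (by positivity)]]
        apply Real.sqrt_le_sqrt
        nlinarith [Nat.cast_nonneg (α := ℝ) n]

lemma sphere_hm_lt_top (n : ℕ) :
    μH[(n : ℝ)] (Metric.sphere (0 : EuclideanSpace ℝ (Fin (n+1))) 1) < ⊤ := by
  set r : EuclideanSpace ℝ (Fin (n+1)) → EuclideanSpace ℝ (Fin (n+1)) :=
    fun x => ‖x‖⁻¹ • x with hr
  have hcover : Metric.sphere (0 : EuclideanSpace ℝ (Fin (n+1))) 1 ⊆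
      ⋃ k : Fin (n+1), (r '' (insE k 1 '' cube n) ∪ r '' (insE k (-1) '' cube n)) := by
    intro x hx
    rw [mem_sphere_zero_iff_norm] at hx
    obtain ⟨k, -, hk⟩ := Finset.exists_max_image Finset.univ (fun j => |x j|)
      ⟨0, Finset.mem_univ 0⟩
    have hmx : 0 < |x k| := by
      rcases lt_or_ge 0 (|x k|) with h | h
      · exact h
      · exfalso
        have hx0 : x = 0 := by
          ext j
          have := hk j (Finset.mem_univ j)
          have := abs_nonneg (x j)
          have : |x j| = 0 := by linarith
          simpa [abs_eq_zero] using this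
        rw [hx0] at hx
        simp at hx
    set mx := |x k| with hmxdef
    set z : EuclideanSpace ℝ (Fin (n+1)) := (mx⁻¹ : ℝ) • x with hz
    have hznorm : ‖z‖ = mx⁻¹ := by
      rw [hz, norm_smul, hx, mul_one, Real.norm_eq_abs, abs_of_pos (by positivity)]
    have hrz : r z = x := by
      rw [hr]
      simp only
      rw [hznorm, inv_inv, hz, smul_smul, mul_inv_cancel₀ (ne_of_gt hmx), one_smul]
    have hycube : delE k z ∈ cube n := by
      intro j
      rw [delE_apply, hz, PiLp.smul_apply, smul_eq_mul, abs_mul,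
        abs_of_pos (inv_pos.mpr hmx)]
      rw [inv_mul_le_iff₀ hmx, mul_one]
      exact hk (k.succAbove j) (Finset.mem_univ _)
    have hzk : z k = 1 ∨ z k = -1 := by
      have : z k = mx⁻¹ * x k := by rw [hz, PiLp.smul_apply, smul_eq_mul]
      rcases abs_cases (x k) with ⟨h1, -⟩ | ⟨h1, -⟩
      · left; rw [this, hmxdef, h1, inv_mul_cancel₀ (by rw [← h1, ← hmxdef]; exact ne_of_gt hmx)]
      · right
        have hxk : x k ≠ 0 := by
          intro h
          rw [hmxdef, h, abs_zero] at hmx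
          exact lt_irrefl 0 hmx
        rw [this, hmxdef, h1]
        field_simp
    have hzins : ∃ c, (c = 1 ∨ c = -1) ∧ z = insE k c (delE k z) := by
      refine ⟨z k, hzk, (insE_delE k z).symm⟩
    obtain ⟨c, hc, hzc⟩ := hzins
    apply Set.mem_iUnion.mpr
    refine ⟨k, ?_⟩
    rcases hc with hc | hc
    · left
      exact ⟨z, ⟨delE k z, hycube, by rw [← hc, ← hzc]⟩, hrz⟩
    · right
      exact ⟨z, ⟨delE k z, hycube, by rw [← hc, ← hzc]⟩, hrz⟩
  have hpiece : ∀ (k : Fin (n+1)) (c : ℝ), |c| = 1 →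
      μH[(n : ℝ)] (r '' (insE k c '' cube n)) < ⊤ := by
    intro k c hc
    have hsub : insE k c '' cube n ⊆ {x : EuclideanSpace ℝ (Fin (n+1)) | 1 ≤ ‖x‖} := by
      rintro _ ⟨y, -, rfl⟩
      have h1 := coord_le_norm (insE k c y) k
      rw [insE_apply_same, hc] at h1
      exact h1
    have hlip := (normalize_lipschitzOn.mono hsub).hausdorffMeasure_image_le
      (by positivity : (0:ℝ) ≤ (n:ℝ))
    have hiso : μH[(n : ℝ)] (insE k c '' cube n) = μH[(n : ℝ)] (cube n) :=
      (insE_isometry k c).hausdorffMeasure_image (Or.inl (by positivity)) _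
    refine lt_of_le_of_lt hlip ?_
    rw [hiso]
    exact ENNReal.mul_lt_top (ENNReal.rpow_lt_top_of_nonneg (by positivity) ENNReal.coe_ne_top)
      (hm_bounded_lt_top n _ (cube_bounded n))
  calc μH[(n : ℝ)] (Metric.sphere (0 : EuclideanSpace ℝ (Fin (n+1))) 1)
      ≤ ∑ k : Fin (n+1), μH[(n : ℝ)] (r '' (insE k 1 '' cube n) ∪ r '' (insE k (-1) '' cube n)) :=
        le_trans (measure_mono hcover) (measure_iUnion_fintype_le _ _)
    _ < ⊤ := by
        apply ENNReal.sum_lt_top.mpr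
        intro k _
        refine lt_of_le_of_lt (measure_union_le _ _) ?_
        exact ENNReal.add_lt_top.mpr ⟨hpiece k 1 (by norm_num), hpiece k (-1) (by norm_num)⟩

lemma sphere_cap_pos (n : ℕ) (p : EuclideanSpace ℝ (Fin (n+1)))
    (hp : p ∈ Metric.sphere (0 : EuclideanSpace ℝ (Fin (n+1))) 1) {ε : ℝ} (hε : 0 < ε) :
    0 < μH[(n : ℝ)] (Metric.sphere (0 : EuclideanSpace ℝ (Fin (n+1))) 1 ∩ Metric.ball p ε) := by
  rw [mem_sphere_zero_iff_norm] at hp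
  -- find a nonzero coordinate of p
  have hpk : ∃ k : Fin (n+1), p k ≠ 0 := by
    by_contra h
    push_neg at h
    have : p = 0 := by ext j; simpa using h j
    rw [this] at hp
    simp at hp
  obtain ⟨k, hk⟩ := hpk
  set s : ℝ := if 0 < p k then 1 else -1 with hs
  set g : EuclideanSpace ℝ (Fin n) → ℝ := fun y => s * Real.sqrt (1 - ‖y‖^2) with hg
  set L : EuclideanSpace ℝ (Fin n) → EuclideanSpace ℝ (Fin (n+1)) :=
    fun y => insE k (g y) y with hL
  set q : EuclideanSpace ℝ (Fin n) := delE k p with hq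
  have hqnorm : ‖q‖^2 = 1 - (p k)^2 := by
    have h1 : ‖p‖^2 = (p k)^2 + ‖q‖^2 := by
      conv_lhs => rw [← insE_delE k p]
      rw [norm_sq_insE, ← hq]
    rw [hp] at h1
    nlinarith
  have hqlt : ‖q‖^2 < 1 := by
    have : 0 < (p k)^2 := by positivity
    nlinarith
  have hLq : L q = p := by
    rw [hL]
    simp only
    have hgq : g q = p k := by
      rw [hg]
      simp only
      rw [hqnorm]
      have : (1:ℝ) - (1 - p k ^ 2) = p k ^ 2 := by ring
      rw [this, Real.sqrt_sq_eq_abs, hs]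
      rcases abs_cases (p k) with ⟨h1, -⟩ | ⟨h1, h2⟩
      · rw [h1]
        split_ifs with h3
        · ring
        · push_neg at h3
          have : p k = 0 := le_antisymm h3 (by rw [← h1]; exact abs_nonneg _)
          exact absurd this hk
      · rw [h1]
        split_ifs with h3
        · linarith
        · ring
    rw [hgq, hq, insE_delE]
  -- continuity of L
  have hLcont : Continuous L := by
    have hgcont : Continuous g := by
      apply Continuous.mul continuous_const
      exact Real.continuous_sqrt.comp (by continuity)
    rw [hL]
    have : Continuous (fun y : EuclideanSpace ℝ (Fin n) =>
        (Fin.insertNth k (g y) (WithLp.equiv 2 (Fin n → ℝ) y) : Fin (n+1) → ℝ)) := by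
      apply Continuous.finInsertNth
      · exact hgcont
      · exact (PiLp.continuous_ofLp 2 (fun _ : Fin n => ℝ))
    exact (PiLp.continuous_toLp 2 (fun _ : Fin (n+1) => ℝ)).comp this
  -- choose δ
  have hL_ball : ∀ᶠ y in nhds q, L y ∈ Metric.ball p ε := by
    have : Metric.ball p ε ∈ nhds (L q) := by
      rw [hLq]
      exact Metric.ball_mem_nhds p hε
    exact hLcont.continuousAt.eventually_mem this
  have hnormlt : ∀ᶠ y in nhds q, ‖y‖^2 < 1 := by
    have hcont : Continuous (fun y : EuclideanSpace ℝ (Fin n) => ‖y‖^2) := by continuity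
    have : {y : EuclideanSpace ℝ (Fin n) | ‖y‖^2 < 1} ∈ nhds q :=
      (isOpen_lt hcont continuous_const).mem_nhds hqlt
    exact this
  obtain ⟨δ, hδpos, hδ⟩ := Metric.eventually_nhds_iff_ball.mp (hL_ball.and hnormlt)
  -- the ball maps into the cap
  have hmap : ∀ y ∈ Metric.ball q δ, L y ∈ Metric.sphere (0 : EuclideanSpace ℝ (Fin (n+1))) 1
      ∩ Metric.ball p ε := by
    intro y hy
    obtain ⟨h1, h2⟩ := hδ y hy
    refine ⟨?_, h1⟩
    rw [mem_sphere_zero_iff_norm]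
    have hnsq : ‖L y‖^2 = 1 := by
      rw [hL]
      simp only
      rw [norm_sq_insE]
      have hgsq : (g y)^2 = 1 - ‖y‖^2 := by
        rw [hg]
        simp only
        rw [mul_pow, Real.sq_sqrt (by linarith)]
        have hs2 : s^2 = 1 := by
          rw [hs]; split_ifs <;> norm_num
        rw [hs2, one_mul]
      rw [hgsq]
      ring
    nlinarith [norm_nonneg (L y)]
  have hsubset : Metric.ball q δ ⊆ delE k ''
      (Metric.sphere (0 : EuclideanSpace ℝ (Fin (n+1))) 1 ∩ Metric.ball p ε) := by
    intro y hy
    exact ⟨L y, hmap y hy, by rw [hL]; simp only; rw [delE_insE]⟩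
  have hpos := hm_open_pos n (Metric.ball q δ) Metric.isOpen_ball
    (Metric.nonempty_ball.mpr hδpos)
  have hlip := (delE_lipschitz k).hausdorffMeasure_image_le
    (by positivity : (0:ℝ) ≤ (n:ℝ))
    (Metric.sphere (0 : EuclideanSpace ℝ (Fin (n+1))) 1 ∩ Metric.ball p ε)
  rw [ENNReal.coe_one, ENNReal.one_rpow, one_mul] at hlip
  exact lt_of_lt_of_le (lt_of_lt_of_le hpos (measure_mono hsubset)) hlip

end AuxLemmas

theorem global_minima_characterization (d m M : ℕ) (hd : 2 ≤ d) (hMd : M ≤ d)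
    (hm : M ≤ m) :
    (∀ W : Fin m → EuclideanSpace ℝ (Fin d),
        loss d m M hMd W = 0 ↔
          (∀ i, W i ∈ Sset d M hMd) ∧
            ∀ j : Fin M, ∑ i, W i (Fin.castLE hMd j) = 1) ∧
      IsCompact {W : Fin m → EuclideanSpace ℝ (Fin d) | loss d m M hMd W = 0} := by
  obtain ⟨n, rfl⟩ : ∃ n, d = n + 1 := ⟨d - 1, by omega⟩
  have hexp : ((n + 1 : ℕ) : ℝ) - 1 = (n : ℝ) := by push_cast; ring
  set S := Metric.sphere (0 : EuclideanSpace ℝ (Fin (n+1))) 1 with hSdef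
  have hmeasS : MeasurableSet S := Metric.isClosed_sphere.measurableSet
  have hsu : sphereUniform (n+1) = (μH[(n : ℝ)] S)⁻¹ • (μH[(n : ℝ)]).restrict S := by
    rw [sphereUniform, hexp]
  have hfin : μH[(n : ℝ)] S < ⊤ := sphere_hm_lt_top n
  have hpos : 0 < μH[(n : ℝ)] S := by
    have hp : EuclideanSpace.single (0 : Fin (n+1)) (1:ℝ) ∈ S := by
      rw [hSdef, mem_sphere_zero_iff_norm, EuclideanSpace.norm_single]
      norm_num
    exact lt_of_lt_of_le (sphere_cap_pos n _ hp one_pos)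
      (measure_mono Set.inter_subset_left)
  have hiff : ∀ W : Fin m → EuclideanSpace ℝ (Fin (n+1)),
      loss (n+1) m M hMd W = 0 ↔
        (∀ i, W i ∈ Sset (n+1) M hMd) ∧
          ∀ j : Fin M, ∑ i, W i (Fin.castLE hMd j) = 1 := by
    intro W
    constructor
    · intro hloss
      set g : EuclideanSpace ℝ (Fin (n+1)) → ℝ :=
        fun x => (∑ i, max ⟪W i, x⟫ 0) - ∑ j : Fin M, max (x (Fin.castLE hMd j)) 0 with hgdef
      have hgcont : Continuous g := by
        apply Continuous.sub
        · exact continuous_finset_sum _ fun i _ =>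
            (Continuous.inner continuous_const continuous_id).max continuous_const
        · refine continuous_finset_sum _ fun j _ => Continuous.max ?_ continuous_const
          exact (continuous_apply (Fin.castLE hMd j)).comp
            (PiLp.continuous_ofLp 2 (fun _ : Fin (n+1) => ℝ))
      have hFcont : Continuous fun x => g x ^ 2 := hgcont.pow 2
      have hloss' : ∫ x, g x ^ 2 ∂(sphereUniform (n+1)) = 0 := hloss
      rw [hsu] at hloss'
      obtain ⟨C, hC⟩ := (isCompact_sphere (0 : EuclideanSpace ℝ (Fin (n+1))) 1
        ).exists_bound_of_continuousOn hFcont.continuousOn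
      have hintOn : IntegrableOn (fun x => g x ^ 2) S (μH[(n : ℝ)]) := by
        apply Measure.integrableOn_of_bounded hfin.ne hFcont.aestronglyMeasurable
        exact (ae_restrict_iff' hmeasS).mpr (Filter.Eventually.of_forall fun x hx => hC x hx)
      have hint : Integrable (fun x => g x ^ 2)
          ((μH[(n : ℝ)] S)⁻¹ • (μH[(n : ℝ)]).restrict S) :=
        hintOn.smul_measure (ENNReal.inv_ne_top.mpr hpos.ne')
      have hae := (integral_eq_zero_iff_of_nonneg (fun x => sq_nonneg (g x)) hint).mp hloss'
      have hnull : ((μH[(n : ℝ)] S)⁻¹ • (μH[(n : ℝ)]).restrict S) {x | g x ^ 2 ≠ 0} = 0 := by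
        rw [Filter.EventuallyEq, ae_iff] at hae
        simpa using hae
      have hsphid : ∀ x ∈ S, ∑ i, max ⟪W i, x⟫ 0
          = ∑ j : Fin M, max (x (Fin.castLE hMd j)) 0 := by
        intro x hx
        by_contra hne
        have hgx : g x ^ 2 ≠ 0 := pow_ne_zero 2 (sub_ne_zero.mpr hne)
        have hopen : IsOpen {y | g y ^ 2 ≠ 0} :=
          isOpen_compl_iff.mpr (isClosed_eq hFcont continuous_const)
        obtain ⟨ε, hε, hball⟩ := Metric.isOpen_iff.mp hopen x hgx
        have h1 : ((μH[(n : ℝ)] S)⁻¹ • (μH[(n : ℝ)]).restrict S) (Metric.ball x ε) = 0 :=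
          measure_mono_null hball hnull
        have h2 : ((μH[(n : ℝ)] S)⁻¹ • (μH[(n : ℝ)]).restrict S) (Metric.ball x ε) ≠ 0 := by
          rw [Measure.smul_apply, smul_eq_mul, Measure.restrict_apply' hmeasS]
          apply mul_ne_zero
          · exact ENNReal.inv_ne_zero.mpr hfin.ne
          · rw [Set.inter_comm]
            exact (sphere_cap_pos n x hx hε).ne'
        exact h2 h1
      exact forward_alg (n+1) m M hMd W (identity_everywhere (n+1) m M hMd W hsphid)
    · rintro ⟨h1, h2⟩
      unfold loss
      have hzero : (fun x : EuclideanSpace ℝ (Fin (n+1)) =>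
          ((∑ i, max ⟪W i, x⟫ 0) - ∑ j : Fin M, max (x (Fin.castLE hMd j)) 0) ^ 2)
          = fun _ => (0:ℝ) := by
        funext x
        rw [converse_alg (n+1) m M hMd W h1 h2 x]
        ring
      rw [hzero]
      exact integral_zero _ _
  refine ⟨hiff, ?_⟩
  have hset : {W : Fin m → EuclideanSpace ℝ (Fin (n+1)) | loss (n+1) m M hMd W = 0} =
      {W | (∀ i, W i ∈ Sset (n+1) M hMd) ∧
        ∀ j : Fin M, ∑ i, W i (Fin.castLE hMd j) = 1} := Set.ext fun W => hiff W
  rw [hset]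
  have hproj : ∀ k : Fin (n+1), Continuous fun w : EuclideanSpace ℝ (Fin (n+1)) => w k :=
    fun k => (continuous_apply k).comp (PiLp.continuous_ofLp 2 (fun _ : Fin (n+1) => ℝ))
  -- closedness of Sset
  have hrayclosed : ∀ j : Fin M, IsClosed
      ({0} ∪ ray (n+1) M hMd j : Set (EuclideanSpace ℝ (Fin (n+1)))) := by
    intro j
    have heq : ({0} ∪ ray (n+1) M hMd j : Set (EuclideanSpace ℝ (Fin (n+1)))) =
        {w | w = w (Fin.castLE hMd j) • EuclideanSpace.single (Fin.castLE hMd j) (1:ℝ)}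
          ∩ {w | 0 ≤ w (Fin.castLE hMd j)} := by
      ext w
      constructor
      · rintro (h0 | ⟨α, hα, rfl⟩)
        · rw [Set.mem_singleton_iff] at h0
          subst h0
          constructor
          · have : (0 : EuclideanSpace ℝ (Fin (n+1))) (Fin.castLE hMd j) = 0 := rfl
            rw [Set.mem_setOf_eq, this, zero_smul]
          · show (0:ℝ) ≤ (0 : EuclideanSpace ℝ (Fin (n+1))) (Fin.castLE hMd j)
            exact le_of_eq rfl
        · have hco : (α • EuclideanSpace.single (Fin.castLE hMd j) (1:ℝ))
              (Fin.castLE hMd j) = α := by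
            rw [PiLp.smul_apply, EuclideanSpace.single_apply, if_pos rfl, smul_eq_mul, mul_one]
          constructor
          · rw [Set.mem_setOf_eq, hco]
          · rw [Set.mem_setOf_eq, hco]
            exact hα.le
      · rintro ⟨hw, hnn⟩
        rw [Set.mem_setOf_eq] at hw hnn
        rcases eq_or_lt_of_le hnn with h0 | hpos
        · left
          rw [Set.mem_singleton_iff, hw, ← h0, zero_smul]
        · right
          exact ⟨w (Fin.castLE hMd j), hpos, hw⟩
    rw [heq]
    apply IsClosed.inter
    · exact isClosed_eq continuous_id ((hproj (Fin.castLE hMd j)).smul continuous_const)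
    · exact isClosed_le continuous_const (hproj (Fin.castLE hMd j))
  have hSclosed : IsClosed (Sset (n+1) M hMd) := by
    have heq : Sset (n+1) M hMd = {0} ∪ ⋃ j : Fin M, ({0} ∪ ray (n+1) M hMd j) := by
      rw [Sset]
      ext w
      simp only [Set.mem_union, Set.mem_iUnion]
      constructor
      · rintro (h0 | ⟨j, hj⟩)
        · exact Or.inl h0
        · exact Or.inr ⟨j, Or.inr hj⟩
      · rintro (h0 | ⟨j, (h0 | hj)⟩)
        · exact Or.inl h0
        · exact Or.inl h0
        · exact Or.inr ⟨j, hj⟩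
    rw [heq]
    exact isClosed_singleton.union (isClosed_iUnion_of_finite hrayclosed)
  apply Metric.isCompact_of_isClosed_isBounded
  · have hdecomp : {W : Fin m → EuclideanSpace ℝ (Fin (n+1)) |
        (∀ i, W i ∈ Sset (n+1) M hMd) ∧
          ∀ j : Fin M, ∑ i, W i (Fin.castLE hMd j) = 1} =
        (⋂ i, (fun W : Fin m → EuclideanSpace ℝ (Fin (n+1)) => W i) ⁻¹' (Sset (n+1) M hMd)) ∩
          ⋂ j : Fin M, {W | ∑ i, W i (Fin.castLE hMd j) = 1} := by
      ext W
      simp only [Set.mem_setOf_eq, Set.mem_inter_iff, Set.mem_iInter, Set.mem_preimage]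
    rw [hdecomp]
    apply IsClosed.inter
    · exact isClosed_iInter fun i => hSclosed.preimage (continuous_apply i)
    · refine isClosed_iInter fun j => isClosed_eq ?_ continuous_const
      exact continuous_finset_sum _ fun i _ =>
        (hproj (Fin.castLE hMd j)).comp (continuous_apply i)
  · apply Bornology.IsBounded.subset
      (Metric.isBounded_closedBall (x := (0 : Fin m → EuclideanSpace ℝ (Fin (n+1)))) (r := 1))
    rintro W ⟨h1, h2⟩
    rw [Metric.mem_closedBall]
    rw [dist_pi_le_iff zero_le_one]
    intro i
    have hnn : ∀ (i' : Fin m) (j0 : Fin M), 0 ≤ W i' (Fin.castLE hMd j0) := by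
      intro i' j0
      rcases h1 i' with h0 | hray
      · rw [Set.mem_singleton_iff] at h0
        rw [h0]
        exact le_of_eq rfl
      · obtain ⟨j2, α, hα, hWi'⟩ := Set.mem_iUnion.mp hray
        rw [hWi', PiLp.smul_apply, EuclideanSpace.single_apply, smul_eq_mul]
        split_ifs
        · rw [mul_one]; exact hα.le
        · rw [mul_zero]
    rcases h1 i with h0 | hray
    · rw [Set.mem_singleton_iff] at h0
      show dist (W i) 0 ≤ 1
      rw [dist_zero_right, h0]
      simp
    · obtain ⟨j2, α, hα, hWi⟩ := Set.mem_iUnion.mp hray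
      have hterm : W i (Fin.castLE hMd j2) = α := by
        rw [hWi, PiLp.smul_apply, EuclideanSpace.single_apply, if_pos rfl, smul_eq_mul, mul_one]
      have hαle : α ≤ 1 := by
        have hle := Finset.single_le_sum (f := fun i' => W i' (Fin.castLE hMd j2))
          (fun i' _ => hnn i' j2) (Finset.mem_univ i)
        have hle' : W i (Fin.castLE hMd j2) ≤ ∑ i', W i' (Fin.castLE hMd j2) := hle
        rw [hterm, h2 j2] at hle'
        exact hle'
      show dist (W i) 0 ≤ 1
      rw [dist_zero_right, hWi, norm_smul, EuclideanSpace.norm_single, Real.norm_eq_abs,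
        abs_of_pos hα, norm_one, mul_one]
      exact hαle
end

section
/- Let d ≥ 2 and m ≥ M with M ≤ d, and let W¹, W² ∈ ℝ^{m×d} satisfy L(W¹) = L(W²) = 0. Suppose the two solutions have equal type vectors, i.e., for each j ∈ {0, 1, …, M} the number of rows of W¹ lying in S_j equals the number of rows of W² lying in S_j. Then there exists a permutation π of {1, …, m} such that, writing πW² for the matrix whose i-th row is the π(i)-th row of W², one has L(λW¹ + (1−λ)πW²) = 0 for every λ ∈ [0, 1]. -/
open MeasureTheory Real Set
open scoped RealInnerProductSpace

lemma loss_eq_zero_of_forall {d m M : ℕ} (hMd : M ≤ d) (W : Fin m → EuclideanSpace ℝ (Fin d))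
    (h : ∀ x, ∑ i, max ⟪W i, x⟫ 0 = ∑ j : Fin M, max (x (Fin.castLE hMd j)) 0) :
    loss d m M hMd W = 0 := by
  unfold loss
  have h2 : (fun x : EuclideanSpace ℝ (Fin d) =>
      (∑ i, max ⟪W i, x⟫ 0 - ∑ j : Fin M, max (x (Fin.castLE hMd j)) 0) ^ 2)
      = fun _ => (0 : ℝ) := by
    funext x; rw [h x, sub_self]; ring
  rw [h2]
  exact integral_zero _ _

lemma sphereUniform_eq_zero {d : ℕ}
    (h : μH[(d : ℝ) - 1] (Metric.sphere (0 : EuclideanSpace ℝ (Fin d)) 1) = 0 ∨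
      μH[(d : ℝ) - 1] (Metric.sphere (0 : EuclideanSpace ℝ (Fin d)) 1) = ⊤) :
    sphereUniform d = 0 := by
  unfold sphereUniform
  rcases h with h | h
  · rw [Measure.restrict_eq_zero.2 h, smul_zero]
  · rw [h, ENNReal.inv_top, zero_smul]

lemma mul_max_zero {c : ℝ} (hc : 0 ≤ c) (t : ℝ) : max (c * t) 0 = c * max t 0 := by
  rcases le_or_gt t 0 with h | h
  · rw [max_eq_right (by nlinarith), max_eq_right h, mul_zero]
  · rw [max_eq_left (by nlinarith), max_eq_left h.le]

lemma sphere_eq_of_loss_zero {d m M : ℕ} (hMd : M ≤ d)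
    (W : Fin m → EuclideanSpace ℝ (Fin d))
    (h0 : μH[(d : ℝ) - 1] (Metric.sphere (0 : EuclideanSpace ℝ (Fin d)) 1) ≠ 0)
    (htop : μH[(d : ℝ) - 1] (Metric.sphere (0 : EuclideanSpace ℝ (Fin d)) 1) ≠ ⊤)
    (hL : loss d m M hMd W = 0) :
    ∀ x ∈ Metric.sphere (0 : EuclideanSpace ℝ (Fin d)) 1,
      ∑ i, max ⟪W i, x⟫ 0 = ∑ j : Fin M, max (x (Fin.castLE hMd j)) 0 := by
  classical
  set S := Metric.sphere (0 : EuclideanSpace ℝ (Fin d)) 1 with hS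
  set F : EuclideanSpace ℝ (Fin d) → ℝ := fun x => ∑ i, max ⟪W i, x⟫ 0 with hF
  set G : EuclideanSpace ℝ (Fin d) → ℝ := fun x => ∑ j : Fin M, max (x (Fin.castLE hMd j)) 0 with hG
  have hFc : Continuous F := by
    apply continuous_finset_sum
    intro i _
    exact (Continuous.inner continuous_const continuous_id).max continuous_const
  have hGc : Continuous G := by
    apply continuous_finset_sum
    intro j _
    exact ((EuclideanSpace.proj (Fin.castLE hMd j) :
      EuclideanSpace ℝ (Fin d) →L[ℝ] ℝ).continuous).max continuous_const
  set q : EuclideanSpace ℝ (Fin d) → ℝ := fun x => (F x - G x) ^ 2 with hq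
  have hqc : Continuous q := (hFc.sub hGc).pow 2
  have hSc : IsCompact S := isCompact_sphere _ _
  have hSm : MeasurableSet S := Metric.isClosed_sphere.measurableSet
  haveI : IsFiniteMeasure ((μH[(d : ℝ) - 1]).restrict S) :=
    ⟨by rw [Measure.restrict_apply_univ]; exact htop.lt_top⟩
  obtain ⟨C, hC⟩ := hSc.exists_bound_of_continuousOn hqc.continuousOn
  have hint_r : Integrable q ((μH[(d : ℝ) - 1]).restrict S) := by
    refine ⟨hqc.aestronglyMeasurable, ?_⟩
    apply HasFiniteIntegral.of_bounded (C := C)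
    exact (ae_restrict_mem hSm).mono fun x hx => hC x hx
  have hint : Integrable q (sphereUniform d) := by
    unfold sphereUniform
    exact hint_r.smul_measure (ENNReal.inv_ne_top.2 h0)
  have hae : q =ᵐ[sphereUniform d] 0 := by
    refine (integral_eq_zero_iff_of_nonneg (fun x => sq_nonneg _) hint).1 ?_
    exact hL
  have hae' : q =ᵐ[(μH[(d : ℝ) - 1]).restrict S] 0 := by
    have heq : ae (sphereUniform d) = ae ((μH[(d : ℝ) - 1]).restrict S) := by
      unfold sphereUniform
      exact Measure.ae_ennreal_smul_measure_eq (ENNReal.inv_ne_zero.2 htop) _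
    rwa [Filter.EventuallyEq, heq] at hae
  -- the bad set
  set V : Set (EuclideanSpace ℝ (Fin d)) := {x | q x ≠ 0} with hV
  have hVopen : IsOpen V := isOpen_compl_singleton.preimage hqc
  have hVm : MeasurableSet V := hVopen.measurableSet
  have hbad : μH[(d : ℝ) - 1] (V ∩ S) = 0 := by
    have h1 : ((μH[(d : ℝ) - 1]).restrict S) V = 0 := by
      have h2 := ae_iff.1 hae'
      exact h2
    rw [Measure.restrict_apply hVm] at h1
    exact h1
  intro x₀ hx₀
  by_contra hne
  have hx₀V : x₀ ∈ V := by
    intro h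
    exact hne (sub_eq_zero.1 (pow_eq_zero_iff two_ne_zero |>.1 h))
  -- construct isometries moving x₀ to any point of S
  have hrefl : ∀ y ∈ S, ∃ g : EuclideanSpace ℝ (Fin d) ≃ₗᵢ[ℝ] EuclideanSpace ℝ (Fin d),
      g x₀ = y := by
    intro y hy
    refine ⟨Submodule.reflection (ℝ ∙ (x₀ - y))ᗮ, ?_⟩
    apply Submodule.reflection_sub
    rw [mem_sphere_zero_iff_norm] at hx₀ hy
    rw [hx₀, hy]
  choose g hg using hrefl
  set O : S → Set (EuclideanSpace ℝ (Fin d)) := fun y => (g y y.2) '' V with hO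
  have hOopen : ∀ y : S, IsOpen (O y) :=
    fun y => ((g y y.2).toHomeomorph.isOpenMap) _ hVopen
  have hcover : S ⊆ ⋃ y : S, O y := by
    intro z hz
    exact mem_iUnion.2 ⟨⟨z, hz⟩, ⟨x₀, hx₀V, hg z hz⟩⟩
  obtain ⟨t, ht⟩ := hSc.elim_finite_subcover O hOopen hcover
  have hle : μH[(d : ℝ) - 1] S ≤ ∑ y ∈ t, μH[(d : ℝ) - 1] (O y ∩ S) := by
    calc μH[(d : ℝ) - 1] S ≤ μH[(d : ℝ) - 1] (⋃ y ∈ t, O y ∩ S) := by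
          apply measure_mono
          intro z hz
          rcases mem_iUnion₂.1 (ht hz) with ⟨y, hyt, hzy⟩
          exact mem_biUnion hyt ⟨hzy, hz⟩
      _ ≤ ∑ y ∈ t, μH[(d : ℝ) - 1] (O y ∩ S) := measure_biUnion_finset_le t _
  have hzero : ∀ y : S, μH[(d : ℝ) - 1] (O y ∩ S) = 0 := by
    intro y
    have himgS : (g y.1 y.2) '' S = S := by
      show (g y.1 y.2) '' Metric.sphere 0 1 = Metric.sphere 0 1
      rw [(g y.1 y.2).image_sphere (0 : EuclideanSpace ℝ (Fin d)) 1, map_zero]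
    have himg : O y ∩ S = (g y.1 y.2) '' (V ∩ S) := by
      rw [image_inter (g y.1 y.2).injective, himgS]
    rw [himg, Isometry.hausdorffMeasure_image (g y.1 y.2).isometry
      (Or.inr (g y.1 y.2).surjective), hbad]
  rw [Finset.sum_eq_zero (fun y _ => hzero y)] at hle
  exact h0 (le_antisymm hle (zero_le))

lemma forall_of_sphere {d m M : ℕ} (hMd : M ≤ d) (W : Fin m → EuclideanSpace ℝ (Fin d))
    (h : ∀ x ∈ Metric.sphere (0 : EuclideanSpace ℝ (Fin d)) 1,
      ∑ i, max ⟪W i, x⟫ 0 = ∑ j : Fin M, max (x (Fin.castLE hMd j)) 0) :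
    ∀ x, ∑ i, max ⟪W i, x⟫ 0 = ∑ j : Fin M, max (x (Fin.castLE hMd j)) 0 := by
  intro x
  rcases eq_or_ne x 0 with rfl | hx
  · simp
  · have hnorm : (0 : ℝ) < ‖x‖ := norm_pos_iff.2 hx
    set y : EuclideanSpace ℝ (Fin d) := ‖x‖⁻¹ • x with hy
    have hyS : y ∈ Metric.sphere (0 : EuclideanSpace ℝ (Fin d)) 1 := by
      rw [mem_sphere_zero_iff_norm, hy, norm_smul, norm_inv, norm_norm,
        inv_mul_cancel₀ hnorm.ne']
    have hxy : x = ‖x‖ • y := by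
      rw [hy, smul_smul, mul_inv_cancel₀ hnorm.ne', one_smul]
    have hkey := h y hyS
    rw [hxy]
    calc ∑ i, max ⟪W i, ‖x‖ • y⟫ 0
        = ∑ i, ‖x‖ * max ⟪W i, y⟫ 0 := by
          refine Finset.sum_congr rfl fun i _ => ?_
          rw [real_inner_smul_right, mul_max_zero (norm_nonneg x)]
      _ = ‖x‖ * ∑ i, max ⟪W i, y⟫ 0 := by rw [Finset.mul_sum]
      _ = ‖x‖ * ∑ j : Fin M, max (y (Fin.castLE hMd j)) 0 := by rw [hkey]
      _ = ∑ j : Fin M, max ((‖x‖ • y) (Fin.castLE hMd j)) 0 := by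
          rw [Finset.mul_sum]
          refine Finset.sum_congr rfl fun j _ => ?_
          have : (‖x‖ • y) (Fin.castLE hMd j) = ‖x‖ * y (Fin.castLE hMd j) := rfl
          rw [this, mul_max_zero (norm_nonneg x)]

lemma row_structure {d m M : ℕ} (hMd : M ≤ d) (W : Fin m → EuclideanSpace ℝ (Fin d))
    (H : ∀ x, ∑ i, max ⟪W i, x⟫ 0 = ∑ j : Fin M, max (x (Fin.castLE hMd j)) 0) :
    ∀ i, W i = 0 ∨ ∃ j, W i ∈ ray d M hMd j := by
  classical
  -- every coordinate of every row is nonnegative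
  have hnonneg : ∀ (k : Fin d) (i : Fin m), 0 ≤ W i k := by
    intro k i
    have h := H (-(EuclideanSpace.single k (1 : ℝ)))
    have hR : (∑ j : Fin M, max ((-(EuclideanSpace.single k (1:ℝ))) (Fin.castLE hMd j)) 0) = 0 := by
      refine Finset.sum_eq_zero fun j _ => ?_
      have hv : (-(EuclideanSpace.single k (1:ℝ))) (Fin.castLE hMd j)
          = -(if Fin.castLE hMd j = k then (1:ℝ) else 0) := by
        simp [EuclideanSpace.single_apply]
      rw [hv]
      split <;> norm_num
    rw [hR] at h
    have hall := (Finset.sum_eq_zero_iff_of_nonneg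
      (fun i _ => le_max_right _ _)).1 h i (Finset.mem_univ i)
    have h1 : ⟪W i, -(EuclideanSpace.single k (1:ℝ))⟫ ≤ 0 := by
      calc ⟪W i, -(EuclideanSpace.single k (1:ℝ))⟫
          ≤ max ⟪W i, -(EuclideanSpace.single k (1:ℝ))⟫ 0 := le_max_left _ _
        _ = 0 := hall
    rw [inner_neg_right, neg_nonpos] at h1
    have h2 : ⟪W i, EuclideanSpace.single k (1:ℝ)⟫ = W i k := by
      simp [EuclideanSpace.inner_single_right]
    rwa [h2] at h1
  -- coordinates at indices ≥ M vanish
  have hzero : ∀ (k : Fin d), M ≤ (k : ℕ) → ∀ i, W i k = 0 := by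
    intro k hk i
    have h := H (EuclideanSpace.single k (1 : ℝ))
    have hR : (∑ j : Fin M, max ((EuclideanSpace.single k (1:ℝ)) (Fin.castLE hMd j)) 0) = 0 := by
      refine Finset.sum_eq_zero fun j _ => ?_
      have hne : Fin.castLE hMd j ≠ k := by
        intro hEq
        have : (j : ℕ) = (k : ℕ) := congrArg Fin.val hEq
        omega
      have hv : (EuclideanSpace.single k (1:ℝ)) (Fin.castLE hMd j) = 0 := by
        rw [EuclideanSpace.single_apply, if_neg hne]
      rw [hv]
      norm_num
    rw [hR] at h
    have hall := (Finset.sum_eq_zero_iff_of_nonneg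
      (fun i _ => le_max_right _ _)).1 h i (Finset.mem_univ i)
    have h1 : ⟪W i, EuclideanSpace.single k (1:ℝ)⟫ ≤ 0 := by
      calc ⟪W i, EuclideanSpace.single k (1:ℝ)⟫
          ≤ max ⟪W i, EuclideanSpace.single k (1:ℝ)⟫ 0 := le_max_left _ _
        _ = 0 := hall
    have h2 : ⟪W i, EuclideanSpace.single k (1:ℝ)⟫ = W i k := by
      simp [EuclideanSpace.inner_single_right]
    rw [h2] at h1
    exact le_antisymm h1 (hnonneg k i)
  intro i₀
  by_cases h0 : W i₀ = 0
  · exact Or.inl h0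
  right
  obtain ⟨k, hk⟩ : ∃ k, W i₀ k ≠ 0 := by
    by_contra hc
    push_neg at hc
    exact h0 ((WithLp.ext_iff _).2 (funext fun k => hc k))
  have hkM : (k : ℕ) < M := by
    by_contra hc
    exact hk (hzero k (le_of_not_gt hc) i₀)
  set e : EuclideanSpace ℝ (Fin d) := EuclideanSpace.single k (1 : ℝ) with he
  set x0 : EuclideanSpace ℝ (Fin d) :=
    WithLp.toLp 2 (fun k' => if (k' : ℕ) < M ∧ k' ≠ k then (1 : ℝ) else 0 : Fin d → ℝ) with hx0
  set a : Fin m → ℝ := fun i => ⟪W i, x0⟫ with ha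
  set b : Fin m → ℝ := fun i => W i k with hb
  have hinner_e : ∀ i, ⟪W i, e⟫ = b i := by
    intro i
    simp [he, hb, EuclideanSpace.inner_single_right]
  have hab : ∀ (i : Fin m) (t : ℝ), ⟪W i, x0 - t • e⟫ = a i - t * b i := by
    intro i t
    rw [inner_sub_right, real_inner_smul_right, hinner_e]
  have ha_expand : ∀ i, a i = ∑ k', W i k' * x0 k' := by
    intro i
    simp [ha, PiLp.inner_apply, RCLike.inner_apply, conj_trivial, mul_comm]
  have hx0_nonneg : ∀ k', 0 ≤ x0 k' := by
    intro k'
    show (0:ℝ) ≤ if (k' : ℕ) < M ∧ k' ≠ k then (1 : ℝ) else 0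
    split <;> norm_num
  have ha_nonneg : ∀ i, 0 ≤ a i := by
    intro i
    rw [ha_expand]
    exact Finset.sum_nonneg fun k' _ => mul_nonneg (hnonneg k' i) (hx0_nonneg k')
  have hb_nonneg : ∀ i, 0 ≤ b i := fun i => hnonneg k i
  -- the value of the teacher at x0 - t • e equals its value at x0, for t ≥ 0
  have hG : ∀ t : ℝ, 0 ≤ t →
      (∑ j : Fin M, max ((x0 - t • e) (Fin.castLE hMd j)) 0)
      = ∑ j : Fin M, max (x0 (Fin.castLE hMd j)) 0 := by
    intro t ht
    refine Finset.sum_congr rfl fun j _ => ?_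
    have hval : (x0 - t • e) (Fin.castLE hMd j)
        = x0 (Fin.castLE hMd j) - t * (if Fin.castLE hMd j = k then (1:ℝ) else 0) := by
      have : (x0 - t • e) (Fin.castLE hMd j) = x0 (Fin.castLE hMd j) - t * e (Fin.castLE hMd j) := rfl
      rw [this, he]
      rw [EuclideanSpace.single_apply]
    by_cases hjk : Fin.castLE hMd j = k
    · have hx0k : x0 (Fin.castLE hMd j) = 0 := by
        rw [hjk]
        show (if (k : ℕ) < M ∧ k ≠ k then (1 : ℝ) else 0) = 0
        simp
      rw [hval, if_pos hjk, hx0k]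
      rw [max_eq_right (by nlinarith), max_eq_right le_rfl]
    · rw [hval, if_neg hjk, mul_zero, sub_zero]
  -- key: evaluate H at x0 and at x0 - t⋆ • e
  set tstar : ℝ := ∑ i, a i / b i with htstar
  have htstar_nonneg : 0 ≤ tstar :=
    Finset.sum_nonneg fun i _ => div_nonneg (ha_nonneg i) (hb_nonneg i)
  have hterm : ∀ i, b i ≠ 0 → a i - tstar * b i ≤ 0 := by
    intro i hbi
    have hbi' : 0 < b i := lt_of_le_of_ne (hb_nonneg i) (Ne.symm hbi)
    have h1 : a i / b i ≤ tstar :=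
      Finset.single_le_sum (f := fun i => a i / b i)
        (fun i _ => div_nonneg (ha_nonneg i) (hb_nonneg i)) (Finset.mem_univ i)
    have h2 := mul_le_mul_of_nonneg_right h1 hbi'.le
    rw [div_mul_cancel₀ _ hbi'.ne'] at h2
    linarith
  have hx00 : x0 - (0:ℝ) • e = x0 := by rw [zero_smul, sub_zero]
  have hEq : (∑ i, max (a i - tstar * b i) 0) = ∑ i, a i := by
    have h1 := H (x0 - tstar • e)
    have h2 := H x0
    have h3 : (∑ i, max ⟪W i, x0 - tstar • e⟫ 0) = ∑ i, max (a i - tstar * b i) 0 :=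
      Finset.sum_congr rfl fun i _ => by rw [hab]
    have h4 : (∑ i, max ⟪W i, x0⟫ 0) = ∑ i, a i :=
      Finset.sum_congr rfl fun i _ => max_eq_left (ha_nonneg i)
    rw [h3, hG tstar htstar_nonneg] at h1
    rw [h4] at h2
    rw [h1, h2]
  have hsplit : (∑ i, max (a i - tstar * b i) 0) = ∑ i, if b i = 0 then a i else 0 := by
    refine Finset.sum_congr rfl fun i _ => ?_
    by_cases hbi : b i = 0
    · rw [if_pos hbi, hbi, mul_zero, sub_zero]
      exact max_eq_left (ha_nonneg i)
    · rw [if_neg hbi]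
      exact max_eq_right (hterm i hbi)
  have hsum0 : (∑ i, if b i = 0 then (0:ℝ) else a i) = 0 := by
    have hdecomp : (∑ i, a i) = (∑ i, if b i = 0 then a i else 0) + ∑ i, if b i = 0 then (0:ℝ) else a i := by
      rw [← Finset.sum_add_distrib]
      refine Finset.sum_congr rfl fun i _ => ?_
      by_cases hbi : b i = 0 <;> simp [hbi]
    rw [hsplit] at hEq
    linarith [hdecomp, hEq]
  have hai₀ : a i₀ = 0 := by
    have := (Finset.sum_eq_zero_iff_of_nonneg (fun i _ => by
      by_cases hbi : b i = 0 <;> simp [hbi, ha_nonneg i])).1 hsum0 i₀ (Finset.mem_univ i₀)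
    rwa [if_neg hk] at this
  -- hence all other coordinates of W i₀ with index < M vanish
  have hcoord : ∀ k' : Fin d, (k' : ℕ) < M → k' ≠ k → W i₀ k' = 0 := by
    intro k' hk'M hk'k
    have h1 := ha_expand i₀
    rw [hai₀] at h1
    have h2 := (Finset.sum_eq_zero_iff_of_nonneg (fun k'' _ =>
      mul_nonneg (hnonneg k'' i₀) (hx0_nonneg k''))).1 h1.symm k' (Finset.mem_univ k')
    have hx0k' : x0 k' = 1 := by
      show (if (k' : ℕ) < M ∧ k' ≠ k then (1 : ℝ) else 0) = 1
      rw [if_pos ⟨hk'M, hk'k⟩]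
    rw [hx0k', mul_one] at h2
    exact h2
  -- conclude
  refine ⟨⟨(k : ℕ), hkM⟩, W i₀ k, lt_of_le_of_ne (hnonneg k i₀) (Ne.symm hk), ?_⟩
  have hcast : Fin.castLE hMd ⟨(k : ℕ), hkM⟩ = k := by
    apply Fin.ext
    rfl
  rw [hcast]
  apply (WithLp.ext_iff _).2
  funext k'
  have hrhs : (W i₀ k • EuclideanSpace.single k (1:ℝ)) k'
      = W i₀ k * (if k' = k then (1:ℝ) else 0) := by
    rw [PiLp.smul_apply, EuclideanSpace.single_apply]
    rfl
  rw [hrhs]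
  by_cases hk' : k' = k
  · rw [if_pos hk', hk', mul_one]
  · rw [if_neg hk', mul_zero]
    by_cases hk'M : (k' : ℕ) < M
    · exact hcoord k' hk'M hk'
    · exact hzero k' (le_of_not_gt hk'M) i₀

lemma ray_ne_zero {d M : ℕ} {hMd : M ≤ d} {j : Fin M} {w : EuclideanSpace ℝ (Fin d)}
    (h : w ∈ ray d M hMd j) : w ≠ 0 := by
  obtain ⟨α, hα, rfl⟩ := h
  intro hc
  have h1 := congrFun (congrArg WithLp.ofLp hc) (Fin.castLE hMd j)
  have h2 : (α • EuclideanSpace.single (Fin.castLE hMd j) (1:ℝ)) (Fin.castLE hMd j) = α := by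
    rw [PiLp.smul_apply, EuclideanSpace.single_apply, if_pos rfl]
    simp
  rw [h2] at h1
  exact hα.ne' h1

lemma ray_unique {d M : ℕ} {hMd : M ≤ d} {j j' : Fin M} {w : EuclideanSpace ℝ (Fin d)}
    (h : w ∈ ray d M hMd j) (h' : w ∈ ray d M hMd j') : j = j' := by
  obtain ⟨α, hα, rfl⟩ := h
  obtain ⟨α', hα', hEq⟩ := h'
  by_contra hne
  have hc : Fin.castLE hMd j ≠ Fin.castLE hMd j' := by
    intro hcc
    exact hne (Fin.castLE_inj.1 hcc)
  have h1 := congrFun (congrArg WithLp.ofLp hEq) (Fin.castLE hMd j)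
  have h2 : (α • EuclideanSpace.single (Fin.castLE hMd j) (1:ℝ)) (Fin.castLE hMd j) = α := by
    rw [PiLp.smul_apply, EuclideanSpace.single_apply, if_pos rfl]; simp
  have h3 : (α' • EuclideanSpace.single (Fin.castLE hMd j') (1:ℝ)) (Fin.castLE hMd j) = 0 := by
    rw [PiLp.smul_apply, EuclideanSpace.single_apply, if_neg hc]; simp
  rw [h2, h3] at h1
  exact hα.ne' h1

open Classical in
noncomputable def typ {d M : ℕ} (hMd : M ≤ d) {m : ℕ}
    (W : Fin m → EuclideanSpace ℝ (Fin d)) (i : Fin m) : Option (Fin M) :=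
  if h : ∃ j, W i ∈ ray d M hMd j then some h.choose else none

lemma typ_eq_some_iff {d M : ℕ} (hMd : M ≤ d) {m : ℕ}
    (W : Fin m → EuclideanSpace ℝ (Fin d)) (i : Fin m) (j : Fin M) :
    typ hMd W i = some j ↔ W i ∈ ray d M hMd j := by
  unfold typ
  constructor
  · intro h
    split at h
    · next hex =>
      rw [Option.some_inj] at h
      exact h ▸ hex.choose_spec
    · exact absurd h (by simp)
  · intro h
    rw [dif_pos ⟨j, h⟩, Option.some_inj]
    exact ray_unique (Exists.choose_spec (⟨j, h⟩ : ∃ j', W i ∈ ray d M hMd j')) h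

lemma typ_eq_none_iff {d M : ℕ} (hMd : M ≤ d) {m : ℕ}
    (W : Fin m → EuclideanSpace ℝ (Fin d)) (i : Fin m)
    (hstr : W i = 0 ∨ ∃ j, W i ∈ ray d M hMd j) :
    typ hMd W i = none ↔ W i = 0 := by
  unfold typ
  constructor
  · intro h
    split at h
    · exact absurd h (by simp)
    · next hex =>
      rcases hstr with h0 | hj
      · exact h0
      · exact absurd hj hex
  · intro h0
    rw [dif_neg]
    rintro ⟨j, hj⟩
    exact ray_ne_zero hj h0

lemma exists_perm {m : ℕ} {γ : Type*} (t₁ t₂ : Fin m → γ)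
    (h : ∀ c, {i | t₁ i = c}.ncard = {i | t₂ i = c}.ncard) :
    ∃ σ : Equiv.Perm (Fin m), ∀ i, t₂ (σ i) = t₁ i := by
  classical
  have he : ∀ c, Nonempty ({i // t₁ i = c} ≃ {i // t₂ i = c}) := by
    intro c
    have h1 : Nat.card {i // t₁ i = c} = Nat.card {i // t₂ i = c} := by
      have h2 := h c
      rwa [← Nat.card_coe_set_eq, ← Nat.card_coe_set_eq] at h2
    exact ⟨Fintype.equivOfCardEq (by
      rw [← Nat.card_eq_fintype_card, ← Nat.card_eq_fintype_card]; exact h1)⟩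
  exact ⟨Equiv.ofFiberEquiv (fun c => (he c).some), fun i => Equiv.ofFiberEquiv_map _ i⟩


theorem matching_type_vectors_imply_LMC (d m M : ℕ) (hd : 2 ≤ d) (hMd : M ≤ d)
    (hm : M ≤ m) (W₁ W₂ : Fin m → EuclideanSpace ℝ (Fin d))
    (h₁ : loss d m M hMd W₁ = 0) (h₂ : loss d m M hMd W₂ = 0)
    (htype₀ : {i | W₁ i = 0}.ncard = {i | W₂ i = 0}.ncard)
    (htype : ∀ j : Fin M,
      {i | W₁ i ∈ ray d M hMd j}.ncard = {i | W₂ i ∈ ray d M hMd j}.ncard) :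
    ∃ σ : Equiv.Perm (Fin m), ∀ lam ∈ Set.Icc (0 : ℝ) 1,
      loss d m M hMd (fun i => lam • W₁ i + (1 - lam) • W₂ (σ i)) = 0 := by
  classical
  by_cases hdeg : μH[(d : ℝ) - 1] (Metric.sphere (0 : EuclideanSpace ℝ (Fin d)) 1) = 0 ∨
      μH[(d : ℝ) - 1] (Metric.sphere (0 : EuclideanSpace ℝ (Fin d)) 1) = ⊤
  · refine ⟨Equiv.refl _, fun lam _ => ?_⟩
    unfold loss
    rw [sphereUniform_eq_zero hdeg]
    exact integral_zero_measure _
  · push_neg at hdeg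
    obtain ⟨h0, htop⟩ := hdeg
    have H₁ : ∀ x, ∑ i, max ⟪W₁ i, x⟫ 0 = ∑ j : Fin M, max (x (Fin.castLE hMd j)) 0 :=
      forall_of_sphere hMd W₁ (sphere_eq_of_loss_zero hMd W₁ h0 htop h₁)
    have H₂ : ∀ x, ∑ i, max ⟪W₂ i, x⟫ 0 = ∑ j : Fin M, max (x (Fin.castLE hMd j)) 0 :=
      forall_of_sphere hMd W₂ (sphere_eq_of_loss_zero hMd W₂ h0 htop h₂)
    have hstr₁ := row_structure hMd W₁ H₁
    have hstr₂ := row_structure hMd W₂ H₂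
    have hcount : ∀ c : Option (Fin M),
        {i | typ hMd W₁ i = c}.ncard = {i | typ hMd W₂ i = c}.ncard := by
      intro c
      cases c with
      | none =>
        have e1 : {i | typ hMd W₁ i = none} = {i | W₁ i = 0} := by
          ext i; exact typ_eq_none_iff hMd W₁ i (hstr₁ i)
        have e2 : {i | typ hMd W₂ i = none} = {i | W₂ i = 0} := by
          ext i; exact typ_eq_none_iff hMd W₂ i (hstr₂ i)
        rw [e1, e2]
        exact htype₀
      | some j =>
        have e1 : {i | typ hMd W₁ i = some j} = {i | W₁ i ∈ ray d M hMd j} := by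
          ext i; exact typ_eq_some_iff hMd W₁ i j
        have e2 : {i | typ hMd W₂ i = some j} = {i | W₂ i ∈ ray d M hMd j} := by
          ext i; exact typ_eq_some_iff hMd W₂ i j
        rw [e1, e2]
        exact htype j
    obtain ⟨σ, hσ⟩ := exists_perm (typ hMd W₁) (typ hMd W₂) hcount
    refine ⟨σ, fun lam hlam => ?_⟩
    obtain ⟨hl0, hl1⟩ := hlam
    apply loss_eq_zero_of_forall
    intro x
    have hrow : ∀ i, max ⟪lam • W₁ i + (1 - lam) • W₂ (σ i), x⟫ 0
        = lam * max ⟪W₁ i, x⟫ 0 + (1 - lam) * max ⟪W₂ (σ i), x⟫ 0 := by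
      intro i
      rcases hstr₁ i with hz | ⟨j, hj⟩
      · have h2 : W₂ (σ i) = 0 := by
          have ht2 : typ hMd W₂ (σ i) = none := by
            rw [hσ i]
            exact (typ_eq_none_iff hMd W₁ i (hstr₁ i)).2 hz
          exact (typ_eq_none_iff hMd W₂ (σ i) (hstr₂ (σ i))).1 ht2
        rw [hz, h2]
        simp
      · have h2 : W₂ (σ i) ∈ ray d M hMd j := by
          have ht2 : typ hMd W₂ (σ i) = some j := by
            rw [hσ i]
            exact (typ_eq_some_iff hMd W₁ i j).2 hj
          exact (typ_eq_some_iff hMd W₂ (σ i) j).1 ht2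
        obtain ⟨α, hα, hWα⟩ := hj
        obtain ⟨β, hβ, hWβ⟩ := h2
        rw [hWα, hWβ, smul_smul, smul_smul, ← add_smul]
        rw [real_inner_smul_left, real_inner_smul_left, real_inner_smul_left]
        rw [mul_max_zero (by nlinarith : (0:ℝ) ≤ lam * α + (1 - lam) * β),
          mul_max_zero hα.le, mul_max_zero hβ.le]
        ring
    calc ∑ i, max ⟪lam • W₁ i + (1 - lam) • W₂ (σ i), x⟫ 0
        = ∑ i, (lam * max ⟪W₁ i, x⟫ 0 + (1 - lam) * max ⟪W₂ (σ i), x⟫ 0) :=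
          Finset.sum_congr rfl fun i _ => hrow i
      _ = lam * (∑ i, max ⟪W₁ i, x⟫ 0) + (1 - lam) * ∑ i, max ⟪W₂ (σ i), x⟫ 0 := by
          rw [Finset.sum_add_distrib, Finset.mul_sum, Finset.mul_sum]
      _ = lam * (∑ j : Fin M, max (x (Fin.castLE hMd j)) 0)
          + (1 - lam) * ∑ j : Fin M, max (x (Fin.castLE hMd j)) 0 := by
          rw [H₁ x, Equiv.sum_comp σ (fun i => max ⟪W₂ i, x⟫ 0), H₂ x]
      _ = ∑ j : Fin M, max (x (Fin.castLE hMd j)) 0 := by ring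
end
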